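/- arXiv:1411.5260 — 3 statements merged into one kernel-verified Lean document; each statement's English description precedes it below -/
import Mathlib

section
/- Let φ⁺, φ⁻ : ℝ → ℝ be convex, let π ∈ (0,1) and δ ∈ ℝ, and assume φ⁺ is differentiable at δ and φ⁻ is differentiable at −δ with φ⁺′(δ) < 0, φ⁻′(−δ) < 0, and φ⁻′(−δ)/(φ⁻′(−δ) + φ⁺′(δ)) = π. Then for every p ∈ [0,1]: if p ≤ π, then Q_p(t) ≥ Q_p(δ) for every t ≥ δ; and symmetrically, if p ≥ π, then Q_p(t) ≥ Q_p(δ) for every t ≤ δ. (Monotone comparison lemma: moving past the consistent threshold in the wrong direction cannot decrease the conditional surrogate risk.) -/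
/-!
For `p ∈ [0,1]` the risk `t ↦ Q_p(t)` is convex with derivative `p·φ⁺′(δ) − (1−p)·φ⁻′(−δ)` at `δ`,
and the consistency condition rewrites this derivative as `(p − π)(φ⁻′(−δ) + φ⁺′(δ))`. As the second
factor is negative, the derivative is `≥ 0` when `p ≤ π` and `≤ 0` when `p ≥ π`; a convex function
lies above its tangent line, so it cannot drop below its value at `δ` on the corresponding side.
-/

/-- Conditional surrogate risk `Q_p(t) = p·φ⁺(t) + (1−p)·φ⁻(−t)`. -/
noncomputable def condSurrRisk (φp φm : ℝ → ℝ) (p t : ℝ) : ℝ :=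
  p * φp t + (1 - p) * φm (-t)

section TangentLine

variable {S : Set ℝ} {f : ℝ → ℝ} {d x y : ℝ}

theorem ConvexOn.add_mul_sub_le_of_hasDerivAt (hf : ConvexOn ℝ S f) (hx : x ∈ S) (hy : y ∈ S)
    (hd : HasDerivAt f d x) : f x + d * (y - x) ≤ f y := by
  rcases lt_trichotomy x y with hxy | rfl | hyx
  · have hslope := hf.le_slope_of_hasDerivAt hx hy hxy hd
    rw [slope_def_field, le_div_iff₀ (sub_pos.mpr hxy)] at hslope
    linarith
  · simp
  · have hslope := hf.slope_le_of_hasDerivAt hy hx hyx hd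
    rw [slope_def_field, div_le_iff₀ (sub_pos.mpr hyx)] at hslope
    linarith

theorem ConvexOn.le_of_hasDerivAt_of_nonneg (hf : ConvexOn ℝ S f) (hx : x ∈ S) (hy : y ∈ S)
    (hd : HasDerivAt f d x) (hd0 : 0 ≤ d) (hxy : x ≤ y) : f x ≤ f y := by
  linarith [hf.add_mul_sub_le_of_hasDerivAt hx hy hd, mul_nonneg hd0 (sub_nonneg.mpr hxy)]

theorem ConvexOn.le_of_hasDerivAt_of_nonpos (hf : ConvexOn ℝ S f) (hx : x ∈ S) (hy : y ∈ S)
    (hd : HasDerivAt f d x) (hd0 : d ≤ 0) (hyx : y ≤ x) : f x ≤ f y := by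
  linarith [hf.add_mul_sub_le_of_hasDerivAt hx hy hd,
    mul_nonneg_of_nonpos_of_nonpos hd0 (sub_nonpos.mpr hyx)]

end TangentLine

theorem convexOn_condSurrRisk {φp φm : ℝ → ℝ} (hφp : ConvexOn ℝ Set.univ φp)
    (hφm : ConvexOn ℝ Set.univ φm) {p : ℝ} (hp0 : 0 ≤ p) (hp1 : p ≤ 1) :
    ConvexOn ℝ Set.univ (condSurrRisk φp φm p) := by
  have hφm_neg : ConvexOn ℝ Set.univ fun t ↦ φm (-t) := hφm.comp_linearMap (-LinearMap.id)
  exact (hφp.smul hp0).add (hφm_neg.smul (sub_nonneg.mpr hp1))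

theorem hasDerivAt_condSurrRisk {φp φm : ℝ → ℝ} {dp dm δ : ℝ} (hdp : HasDerivAt φp dp δ)
    (hdm : HasDerivAt φm dm (-δ)) (p : ℝ) :
    HasDerivAt (condSurrRisk φp φm p) (p * dp - (1 - p) * dm) δ := by
  have hdm_neg : HasDerivAt (fun t ↦ φm (-t)) (-dm) δ := by
    have h := hdm.comp δ (hasDerivAt_neg δ)
    rwa [mul_neg_one] at h
  have h := (hdp.const_mul p).add (hdm_neg.const_mul (1 - p))
  rw [mul_neg, ← sub_eq_add_neg] at h
  exact h

theorem stmt_8_general (φp φm : ℝ → ℝ)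
    (hφp : ConvexOn ℝ Set.univ φp) (hφm : ConvexOn ℝ Set.univ φm)
    (π δ : ℝ)
    (dp dm : ℝ) (hdp : HasDerivAt φp dp δ) (hdm : HasDerivAt φm dm (-δ))
    (hdp0 : dp < 0) (hdm0 : dm < 0) (hratio : dm / (dm + dp) = π)
    (p : ℝ) (hp0 : 0 ≤ p) (hp1 : p ≤ 1) :
    (p ≤ π → ∀ t : ℝ, δ ≤ t → condSurrRisk φp φm p δ ≤ condSurrRisk φp φm p t)
    ∧ (π ≤ p → ∀ t : ℝ, t ≤ δ → condSurrRisk φp φm p δ ≤ condSurrRisk φp φm p t) := by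
  have hsum : dm + dp < 0 := by linarith
  have hderiv_eq : p * dp - (1 - p) * dm = (p - π) * (dm + dp) := by
    rw [← hratio]
    field_simp [hsum.ne]
    ring
  have hconv := convexOn_condSurrRisk hφp hφm hp0 hp1
  have hderiv := hasDerivAt_condSurrRisk hdp hdm p
  rw [hderiv_eq] at hderiv
  refine ⟨fun hpπ t hδt ↦ ?_, fun hπp t htδ ↦ ?_⟩
  · exact hconv.le_of_hasDerivAt_of_nonneg trivial trivial hderiv
      (mul_nonneg_of_nonpos_of_nonpos (sub_nonpos.mpr hpπ) hsum.le) hδt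
  · exact hconv.le_of_hasDerivAt_of_nonpos trivial trivial hderiv
      (mul_nonpos_of_nonneg_of_nonpos (sub_nonneg.mpr hπp) hsum.le) htδ

/-- Monotone comparison lemma: for convex surrogates satisfying the consistency conditions at
`(π, δ)`, if `p ≤ π` then `Q_p(t) ≥ Q_p(δ)` for every `t ≥ δ`, and if `p ≥ π` then
`Q_p(t) ≥ Q_p(δ)` for every `t ≤ δ`. -/
theorem stmt_8 (φp φm : ℝ → ℝ)
    (hφp : ConvexOn ℝ Set.univ φp) (hφm : ConvexOn ℝ Set.univ φm)
    (π δ : ℝ) (hπ0 : 0 < π) (hπ1 : π < 1)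
    (dp dm : ℝ) (hdp : HasDerivAt φp dp δ) (hdm : HasDerivAt φm dm (-δ))
    (hdp0 : dp < 0) (hdm0 : dm < 0) (hratio : dm / (dm + dp) = π)
    (p : ℝ) (hp0 : 0 ≤ p) (hp1 : p ≤ 1) :
    (p ≤ π → ∀ t : ℝ, δ ≤ t → condSurrRisk φp φm p δ ≤ condSurrRisk φp φm p t)
    ∧ (π ≤ p → ∀ t : ℝ, t ≤ δ → condSurrRisk φp φm p δ ≤ condSurrRisk φp φm p t) :=
  stmt_8_general φp φm hφp hφm π δ dp dm hdp hdm hdp0 hdm0 hratio p hp0 hp1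
end

section
/- In addition to the hypotheses of the excess risk bound (convex nonnegative surrogates φ⁺, φ⁻ satisfying the consistency conditions at each (π_k, δ_k), and constants C > 0, s ≥ 1 with |p(x) − π_k|^s ≤ C^s·(Q_{p(x)}(δ_k) − inf_{t∈ℝ} Q_{p(x)}(t)) for all x and k), assume the margin condition with constants A ≥ 1 and α > 0, and set β = α/(1+α). Then there exists a constant D > 0, depending only on C, s, A, and α, such that for every measurable f : 𝒳 → ℝ: ΔR(f) ≤ D·ΔQ(f)^{1/(s+β−βs)}. -/
/-!
Pointwise, the excess risk of the interval rule is `(2/K) ∑ₖ |p - πₖ|`, the sum running over the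
thresholds `k` on which the rule disagrees with the Bayes rule. For such a `k`, convexity of `Q_p`
and the consistency condition at `(πₖ, δₖ)` put `δₖ` between `f x` and the minimisers of `Q_p`, so
`Q_p(δₖ) ≤ Q_p(f x)` and the comparison hypothesis gives `|p - πₖ|^s ≤ C^s ΔQ_p(f x)`. Splitting
at a level `ε` below the gaps of the `πₖ`, the terms with `|p - πₖ| ≤ ε` have total mass at most
`ε · A ε^α` by the margin condition, and the others are at most `|p - πₖ|^s / ε^(s-1)`; hence
`ΔR ≤ 2A ε^(1+α) + 2C^s ε^(1-s) ΔQ`. Taking `ε^(s+α) = ΔQ` gives `ΔR ≲ ΔQ^((1+α)/(s+α))`; when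
this `ε` is too large, the trivial bound `ΔR ≤ 2` suffices.
-/
open MeasureTheory ENNReal

/-- Conditional theoretical risk of the generalized 0-1 loss. -/
noncomputable def condRisk (K : ℕ) (pp : ℕ → ℝ) (p : ℝ) (h : ℕ) : ℝ :=
  (2 / K) * (p * ∑ k ∈ Finset.Icc (h + 1) K, (1 - pp k)
    + (1 - p) * ∑ k ∈ Finset.Icc 1 h, pp k)

/-- Excess theoretical risk `ΔR(f)` of the interval rule induced by thresholds `δ`. -/
noncomputable def excessR {X : Type*} [MeasurableSpace X] (μ : Measure X)
    (K : ℕ) (pp : ℕ → ℝ) (p : X → ℝ) (δ : ℕ → ℝ) (f : X → ℝ) : ℝ≥0∞ :=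
  ∫⁻ x, ENNReal.ofReal
    (condRisk K pp (p x) (((Finset.Icc 1 K).filter fun k => δ k < f x).card)
      - condRisk K pp (p x) (((Finset.Icc 1 K).filter fun k => pp k < p x).card)) ∂μ

/-- Excess surrogate risk `ΔQ(f)`. -/
noncomputable def excessQ {X : Type*} [MeasurableSpace X] (μ : Measure X)
    (φp φm : ℝ → ℝ) (p : X → ℝ) (f : X → ℝ) : ℝ≥0∞ :=
  ∫⁻ x, ENNReal.ofReal
    (condSurrRisk φp φm (p x) (f x) - ⨅ t : ℝ, condSurrRisk φp φm (p x) t) ∂μ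

open Finset

noncomputable def condSurrExcess (φp φm : ℝ → ℝ) (p t : ℝ) : ℝ :=
  condSurrRisk φp φm p t - ⨅ t' : ℝ, condSurrRisk φp φm p t'

noncomputable def condRiskExcess (K : ℕ) (pp δ : ℕ → ℝ) (p t : ℝ) : ℝ :=
  condRisk K pp p ((Icc 1 K).filter fun k => δ k < t).card
    - condRisk K pp p ((Icc 1 K).filter fun k => pp k < p).card

lemma ConvexOn.add_mul_sub_le_of_hasDerivAt_s10 {f : ℝ → ℝ} {f' a : ℝ}
    (hf : ConvexOn ℝ Set.univ f) (hd : HasDerivAt f f' a) (t : ℝ) : f a + f' * (t - a) ≤ f t := by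
  rcases lt_trichotomy t a with hta | rfl | hat
  · have := hf.slope_le_of_hasDerivAt trivial trivial hta hd
    rw [slope_def_field, div_le_iff₀ (sub_pos.2 hta)] at this
    linarith
  · simp
  · have := hf.le_slope_of_hasDerivAt trivial trivial hat hd
    rw [slope_def_field, le_div_iff₀ (sub_pos.2 hat)] at this
    linarith

lemma condSurrRisk_le_of_misclassified {φp φm : ℝ → ℝ} (hφp : ConvexOn ℝ Set.univ φp)
    (hφm : ConvexOn ℝ Set.univ φm) {p δ π dp dm t : ℝ} (hp0 : 0 ≤ p) (hp1 : p ≤ 1)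
    (hdp : HasDerivAt φp dp δ) (hdm : HasDerivAt φm dm (-δ)) (hd : dm + dp < 0)
    (hπ : dm / (dm + dp) = π) (hmis : ¬(δ < t ↔ π < p)) :
    condSurrRisk φp φm p δ ≤ condSurrRisk φp φm p t := by
  have hp := mul_le_mul_of_nonneg_left (hφp.add_mul_sub_le_of_hasDerivAt_s10 hdp t) hp0
  have hm := mul_le_mul_of_nonneg_left (hφm.add_mul_sub_le_of_hasDerivAt_s10 hdm (-t))
    (sub_nonneg.2 hp1)
  have hdm_eq : dm = π * (dm + dp) := by rw [← hπ, div_mul_cancel₀ _ hd.ne]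
  -- the slope of `Q_p` at `δ` is `(dm + dp) * (p - π)`, and a misclassified `t` lies uphill of `δ`
  have hside : (t - δ) * (p - π) ≤ 0 := by
    rcases lt_or_ge δ t with hδt | htδ
    · have : p ≤ π := not_lt.1 fun hπp => hmis (iff_of_true hδt hπp)
      exact mul_nonpos_of_nonneg_of_nonpos (by linarith) (by linarith)
    · have : π < p := by_contra fun hπp => hmis (iff_of_false (not_lt.2 htδ) hπp)
      exact mul_nonpos_of_nonpos_of_nonneg (by linarith) (by linarith)
  have hslope := mul_nonneg_of_nonpos_of_nonpos hd.le hside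
  unfold condSurrRisk
  linear_combination hp + hm + hslope + (t - δ) * hdm_eq

lemma condSurrExcess_nonneg {φp φm : ℝ → ℝ} (hφp : ∀ z, 0 ≤ φp z) (hφm : ∀ z, 0 ≤ φm z)
    {p : ℝ} (hp0 : 0 ≤ p) (hp1 : p ≤ 1) (t : ℝ) : 0 ≤ condSurrExcess φp φm p t := by
  have hbdd : BddBelow (Set.range (condSurrRisk φp φm p)) := by
    refine ⟨0, ?_⟩
    rintro _ ⟨u, rfl⟩
    exact add_nonneg (mul_nonneg hp0 (hφp u)) (mul_nonneg (sub_nonneg.2 hp1) (hφm (-u)))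
  exact sub_nonneg.2 (ciInf_le hbdd t)

section Combinatorics

variable {K : ℕ}

lemma Finset.filter_Icc_one_eq_Icc_card {P : ℕ → Prop} [DecidablePred P]
    (hP : ∀ ⦃j k⦄, 1 ≤ j → j ≤ k → k ≤ K → P k → P j) :
    (Icc 1 K).filter P = Icc 1 ((Icc 1 K).filter P).card := by
  set S := (Icc 1 K).filter P
  rcases S.eq_empty_or_nonempty with hS | hS
  · simp [hS]
  have hmax : S.max' hS ∈ Icc 1 K ∧ P (S.max' hS) := mem_filter.1 (S.max'_mem hS)
  have hSm : S = Icc 1 (S.max' hS) := by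
    ext k
    refine ⟨fun hk => mem_Icc.2 ⟨(mem_Icc.1 (mem_filter.1 hk).1).1, S.le_max' k hk⟩,
      fun hk => mem_filter.2 ⟨?_, ?_⟩⟩
    · exact mem_Icc.2 ⟨(mem_Icc.1 hk).1, (mem_Icc.1 hk).2.trans (mem_Icc.1 hmax.1).2⟩
    · exact hP (mem_Icc.1 hk).1 (mem_Icc.1 hk).2 (mem_Icc.1 hmax.1).2 hmax.2
  conv_rhs => rw [hSm, Nat.card_Icc, Nat.add_sub_cancel]
  exact hSm

lemma Finset.filter_lt_Icc_one_eq_Icc_card {β : Type*} [LinearOrder β] {g : ℕ → β}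
    (hg : MonotoneOn g (Set.Icc 1 K)) (c : β) :
    (Icc 1 K).filter (fun k => g k < c) = Icc 1 ((Icc 1 K).filter fun k => g k < c).card :=
  filter_Icc_one_eq_Icc_card fun _ _ hj hjk hkK hk =>
    (hg ⟨hj, hjk.trans hkK⟩ ⟨hj.trans hjk, hkK⟩ hjk).trans_lt hk

lemma condRisk_card_filter_lt {g : ℕ → ℝ} (hg : MonotoneOn g (Set.Icc 1 K))
    (pp : ℕ → ℝ) (p c : ℝ) :
    condRisk K pp p ((Icc 1 K).filter fun k => g k < c).card
      = 2 / K * (p * ∑ k ∈ Icc 1 K, (1 - pp k)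
        + ∑ k ∈ Icc 1 K, if g k < c then pp k - p else 0) := by
  set h := ((Icc 1 K).filter fun k => g k < c).card
  have hhK : h ≤ K := (card_filter_le _ _).trans (by simp)
  have hsplit : ∀ u : ℕ → ℝ,
      ∑ k ∈ Icc (h + 1) K, u k = ∑ k ∈ Icc 1 K, u k - ∑ k ∈ Icc 1 h, u k := by
    intro u
    rw [eq_sub_iff_add_eq', Icc_add_one_left_eq_Ioc, ← zero_add 1, Icc_add_one_left_eq_Ioc,
      Icc_add_one_left_eq_Ioc, sum_Ioc_consecutive _ h.zero_le hhK]
  have hsum : (∑ k ∈ Icc 1 K, if g k < c then pp k - p else 0) = ∑ k ∈ Icc 1 h, (pp k - p) := by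
    rw [← sum_filter]
    exact congrArg (fun s => ∑ k ∈ s, (pp k - p)) (filter_lt_Icc_one_eq_Icc_card hg c)
  unfold condRisk
  rw [hsum, hsplit]
  simp only [sum_sub_distrib, sum_const]
  ring

lemma condRiskExcess_eq {pp δ : ℕ → ℝ} (hpp : MonotoneOn pp (Set.Icc 1 K))
    (hδ : MonotoneOn δ (Set.Icc 1 K)) (p t : ℝ) :
    condRiskExcess K pp δ p t
      = 2 / K * ∑ k ∈ Icc 1 K, if (δ k < t ↔ pp k < p) then 0 else |p - pp k| := by
  rw [condRiskExcess, condRisk_card_filter_lt hδ, condRisk_card_filter_lt hpp, ← mul_sub,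
    add_sub_add_left_eq_sub, ← sum_sub_distrib]
  congr 1
  refine sum_congr rfl fun k _ => ?_
  by_cases ht : δ k < t <;> by_cases hp : pp k < p <;> simp [ht, hp]
  · rw [abs_sub_comm, abs_of_nonneg (sub_nonneg.2 (not_lt.1 hp))]
  · exact (abs_of_pos (sub_pos.2 hp)).symm

end Combinatorics

lemma le_div_rpow_of_rpow_le {η ε s y : ℝ} (hε : 0 < ε) (hεη : ε < η) (hs : 1 ≤ s)
    (hη : η ^ s ≤ y) : η ≤ y / ε ^ (s - 1) := by
  have hη0 : 0 < η := hε.trans hεη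
  rw [le_div_iff₀ (Real.rpow_pos_of_pos hε _)]
  calc η * ε ^ (s - 1) ≤ η * η ^ (s - 1) :=
        mul_le_mul_of_nonneg_left (Real.rpow_le_rpow hε.le hεη.le (by linarith)) hη0.le
    _ = η ^ s := by rw [← Real.rpow_one_add' hη0.le (by linarith), add_sub_cancel]
    _ ≤ y := hη

section PointwiseBounds

variable {K : ℕ} {pp δ : ℕ → ℝ}

lemma condRiskExcess_le_two (hK : 1 ≤ K) (hpp : MonotoneOn pp (Set.Icc 1 K))
    (hδ : MonotoneOn δ (Set.Icc 1 K)) {p t : ℝ} (h : ∀ k ∈ Icc 1 K, |p - pp k| ≤ 1) :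
    condRiskExcess K pp δ p t ≤ 2 := by
  have hK0 : (0 : ℝ) < K := by exact_mod_cast hK
  rw [condRiskExcess_eq hpp hδ]
  calc 2 / K * ∑ k ∈ Icc 1 K, (if (δ k < t ↔ pp k < p) then 0 else |p - pp k|)
      ≤ 2 / K * ∑ _k ∈ Icc 1 K, (1 : ℝ) := by
        gcongr with k hk
        split_ifs
        exacts [zero_le_one, h k hk]
    _ = 2 := by simp [field]

lemma condRiskExcess_le_margin_add (hK : 1 ≤ K) (hpp : MonotoneOn pp (Set.Icc 1 K))
    (hδ : MonotoneOn δ (Set.Icc 1 K)) {p t s ε y : ℝ} (hs : 1 ≤ s) (hε : 0 < ε) (hy : 0 ≤ y)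
    (h : ∀ k ∈ Icc 1 K, ¬(δ k < t ↔ pp k < p) → |p - pp k| ^ s ≤ y) :
    condRiskExcess K pp δ p t
      ≤ 2 / K * ∑ k ∈ Icc 1 K, (if |p - pp k| ≤ ε then ε else 0) + 2 * y / ε ^ (s - 1) := by
  have hK0 : (0 : ℝ) < K := by exact_mod_cast hK
  have hy' : 0 ≤ y / ε ^ (s - 1) := div_nonneg hy (Real.rpow_pos_of_pos hε _).le
  rw [condRiskExcess_eq hpp hδ]
  calc 2 / K * ∑ k ∈ Icc 1 K, (if (δ k < t ↔ pp k < p) then 0 else |p - pp k|)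
      ≤ 2 / K * ∑ k ∈ Icc 1 K, ((if |p - pp k| ≤ ε then ε else 0) + y / ε ^ (s - 1)) := by
        gcongr with k hk
        split_ifs with hmis hclose hclose
        · exact add_nonneg hε.le hy'
        · rwa [zero_add]
        · linarith
        · rw [zero_add]
          exact le_div_rpow_of_rpow_le hε (not_le.1 hclose) hs (h k hk hmis)
    _ = 2 / K * ∑ k ∈ Icc 1 K, (if |p - pp k| ≤ ε then ε else 0) + 2 * y / ε ^ (s - 1) := by
        rw [sum_add_distrib, sum_const, Nat.card_Icc, nsmul_eq_mul]
        field_simp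
        push_cast
        ring


lemma ofReal_condRiskExcess_le_margin_add (hK : 1 ≤ K) (hpp : MonotoneOn pp (Set.Icc 1 K))
    (hδ : MonotoneOn δ (Set.Icc 1 K)) {p t s ε y : ℝ} (hs : 1 ≤ s) (hε : 0 < ε) (hy : 0 ≤ y)
    (h : ∀ k ∈ Icc 1 K, ¬(δ k < t ↔ pp k < p) → |p - pp k| ^ s ≤ y) :
    ENNReal.ofReal (condRiskExcess K pp δ p t)
      ≤ ∑ k ∈ Icc 1 K, (if |p - pp k| ≤ ε then ENNReal.ofReal (2 / K * ε) else 0)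
        + ENNReal.ofReal (2 * y / ε ^ (s - 1)) := by
  have hsum : ENNReal.ofReal (2 / K * ∑ k ∈ Icc 1 K, if |p - pp k| ≤ ε then ε else 0)
      = ∑ k ∈ Icc 1 K, (if |p - pp k| ≤ ε then ENNReal.ofReal (2 / K * ε) else 0) := by
    rw [mul_sum, ENNReal.ofReal_sum_of_nonneg fun k _ => by positivity]
    refine sum_congr rfl fun k _ => ?_
    split_ifs <;> simp
  rw [← hsum]
  exact (ENNReal.ofReal_le_ofReal
    (condRiskExcess_le_margin_add hK hpp hδ hs hε hy h)).trans ENNReal.ofReal_add_le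
end PointwiseBounds

section Integrated

variable {X : Type*} [MeasurableSpace X] {μ : Measure X} {K : ℕ} {pp δ : ℕ → ℝ} {p : X → ℝ}

lemma excessR_le_two [IsProbabilityMeasure μ] (hK : 1 ≤ K) (hpp : MonotoneOn pp (Set.Icc 1 K))
    (hδ : MonotoneOn δ (Set.Icc 1 K)) (h : ∀ x, ∀ k ∈ Icc 1 K, |p x - pp k| ≤ 1) (f : X → ℝ) :
    excessR μ K pp p δ f ≤ ENNReal.ofReal 2 :=
  calc excessR μ K pp p δ f ≤ ∫⁻ _, ENNReal.ofReal 2 ∂μ :=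
        lintegral_mono fun x => ENNReal.ofReal_le_ofReal (condRiskExcess_le_two hK hpp hδ (h x))
    _ = ENNReal.ofReal 2 := by simp

lemma excessR_le_margin_add (hK : 1 ≤ K) (hpp : MonotoneOn pp (Set.Icc 1 K))
    (hδ : MonotoneOn δ (Set.Icc 1 K)) (hp : Measurable p) {f q : X → ℝ} {s ε A α c : ℝ}
    (hs : 1 ≤ s) (hε : 0 < ε) (hc : 0 ≤ c) (hq : ∀ x, 0 ≤ q x)
    (hmargin : ∀ k ∈ Icc 1 K, μ {x | |p x - pp k| ≤ ε} ≤ ENNReal.ofReal (A * ε ^ α))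
    (h : ∀ x, ∀ k ∈ Icc 1 K, ¬(δ k < f x ↔ pp k < p x) → |p x - pp k| ^ s ≤ c * q x) :
    excessR μ K pp p δ f ≤ ENNReal.ofReal (2 * A * ε ^ (1 + α))
      + ENNReal.ofReal (2 * c / ε ^ (s - 1)) * ∫⁻ x, ENNReal.ofReal (q x) ∂μ := by
  have hK0 : (0 : ℝ) < K := by exact_mod_cast hK
  set S : ℕ → Set X := fun k => {x | |p x - pp k| ≤ ε}
  have hS : ∀ k, MeasurableSet (S k) :=
    fun k => measurableSet_le (hp.sub measurable_const).abs measurable_const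
  set w := ENNReal.ofReal (2 / K * ε)
  have hc' : 0 ≤ 2 * c / ε ^ (s - 1) := div_nonneg (by linarith) (Real.rpow_pos_of_pos hε _).le
  have hpt : ∀ x, ENNReal.ofReal (condRiskExcess K pp δ (p x) (f x))
      ≤ ∑ k ∈ Icc 1 K, (S k).indicator (fun _ => w) x
        + ENNReal.ofReal (2 * c / ε ^ (s - 1)) * ENNReal.ofReal (q x) := by
    intro x
    rw [← ENNReal.ofReal_mul hc']
    convert ofReal_condRiskExcess_le_margin_add hK hpp hδ hs hε (mul_nonneg hc (hq x)) (h x)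
      using 2
    · simp [Set.indicator_apply, S, w]
    · ring_nf
  have hmass : ∀ k ∈ Icc 1 K, w * μ (S k) ≤ ENNReal.ofReal (2 / K * (A * ε ^ (1 + α))) := by
    intro k hk
    calc w * μ (S k) ≤ w * ENNReal.ofReal (A * ε ^ α) := by gcongr; exact hmargin k hk
      _ = ENNReal.ofReal (2 / K * (A * ε ^ (1 + α))) := by
        rw [← ENNReal.ofReal_mul (by positivity), Real.rpow_add hε, Real.rpow_one]
        ring_nf
  calc excessR μ K pp p δ f
      ≤ ∫⁻ x, (∑ k ∈ Icc 1 K, (S k).indicator (fun _ => w) x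
          + ENNReal.ofReal (2 * c / ε ^ (s - 1)) * ENNReal.ofReal (q x)) ∂μ := lintegral_mono hpt
    _ = ∑ k ∈ Icc 1 K, w * μ (S k)
          + ENNReal.ofReal (2 * c / ε ^ (s - 1)) * ∫⁻ x, ENNReal.ofReal (q x) ∂μ := by
        rw [lintegral_add_left (Finset.measurable_sum _ fun k _ =>
            measurable_const.indicator (hS k)),
          lintegral_finsetSum _ fun k _ => measurable_const.indicator (hS k),
          lintegral_const_mul' _ _ ENNReal.ofReal_ne_top]
        simp_rw [lintegral_indicator_const (hS _)]
    _ ≤ ENNReal.ofReal (2 * A * ε ^ (1 + α))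
          + ENNReal.ofReal (2 * c / ε ^ (s - 1)) * ∫⁻ x, ENNReal.ofReal (q x) ∂μ := by
        gcongr
        refine (sum_le_sum hmass).trans_eq ?_
        rw [sum_const, Nat.card_Icc, nsmul_eq_mul, Nat.add_sub_cancel, ← ENNReal.ofReal_natCast,
          ← ENNReal.ofReal_mul (Nat.cast_nonneg _)]
        congr 1
        field_simp

end Integrated

lemma strictMonoOn_Icc_zero_of_lt_add_one {β : Type*} [Preorder β] {K : ℕ} {g : ℕ → β}
    (h0 : g 0 < g 1) (hK : g K < g (K + 1)) (h : ∀ k, 1 ≤ k → k < K → g k < g (k + 1)) :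
    StrictMonoOn g (Set.Icc 0 (K + 1)) := by
  refine strictMonoOn_of_lt_add_one Set.ordConnected_Icc fun k _ _ hk1 => ?_
  rcases Nat.eq_zero_or_pos k with rfl | hk0
  · exact h0
  rcases Nat.lt_or_ge k K with hkK | hkK
  · exact h k hk0 hkK
  · obtain rfl : k = K := le_antisymm (by simpa using hk1.2) hkK
    exact hK

open Filter Topology in
lemma Finset.exists_pos_forall_lt {ι : Type*} (s : Finset ι) {g : ι → ℝ}
    (hg : ∀ i ∈ s, 0 < g i) : ∃ τ, 0 < τ ∧ ∀ i ∈ s, τ < g i := by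
  have hsmall : ∀ᶠ τ in 𝓝[>] (0 : ℝ), τ ∈ Set.Ioi 0 ∧ ∀ i ∈ s, τ < g i :=
    eventually_mem_nhdsWithin.and ((eventually_all_finset s).2 fun i hi =>
      (eventually_lt_nhds (hg i hi)).filter_mono nhdsWithin_le_nhds)
  exact hsmall.exists

open Filter Topology in
lemma nonpos_of_forall_le_mul_rpow {E a γ τ : ℝ} (hγ : 0 < γ) (hτ : 0 < τ)
    (h : ∀ ε, 0 < ε → ε ≤ τ → E ≤ a * ε ^ γ) : E ≤ 0 := by
  have hlim : Tendsto (fun ε : ℝ => a * ε ^ γ) (𝓝[>] 0) (𝓝 0) := by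
    have := ((Real.continuousAt_rpow_const 0 γ (Or.inr hγ.le)).tendsto.const_mul a).mono_left
      (nhdsWithin_le_nhds (s := Set.Ioi 0))
    simpa [Real.zero_rpow hγ.ne'] using this
  refine ge_of_tendsto hlim ?_
  filter_upwards [Ioc_mem_nhdsGT hτ] with ε hε using h ε hε.1 hε.2

lemma le_max_mul_rpow_of_tradeoff {E b τ a c M α s : ℝ} (hτ : 0 < τ) (hα : 0 < 1 + α)
    (hsα : 0 < s + α) (hM : 0 ≤ M) (hb : 0 ≤ b) (hEM : E ≤ M)
    (h : ∀ ε, 0 < ε → ε ≤ τ → E ≤ a * ε ^ (1 + α) + c / ε ^ (s - 1) * b) :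
    E ≤ max (a + c) (M / τ ^ (1 + α)) * b ^ ((1 + α) / (s + α)) := by
  rcases hb.eq_or_lt with rfl | hb
  · rw [Real.zero_rpow (div_pos hα hsα).ne', mul_zero]
    exact nonpos_of_forall_le_mul_rpow hα hτ fun ε hε hετ => by simpa using h ε hε hετ
  set r := (1 + α) / (s + α) with hr
  -- `ε ^ (s + α) = b` balances the two terms of the trade-off, both becoming multiples of `b ^ r`
  set ε := b ^ (1 / (s + α))
  have hε : 0 < ε := Real.rpow_pos_of_pos hb _
  have h1 : ε ^ (1 + α) = b ^ r := by
    rw [← Real.rpow_mul hb.le, hr]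
    congr 1
    field_simp
  have h2 : b / ε ^ (s - 1) = b ^ r := by
    rw [show r = 1 - 1 / (s + α) * (s - 1) by rw [hr]; field_simp; ring, Real.rpow_sub hb,
      Real.rpow_one, Real.rpow_mul hb.le]
  rcases le_or_gt ε τ with hετ | hτε
  · calc E ≤ a * ε ^ (1 + α) + c / ε ^ (s - 1) * b := h ε hε hετ
      _ = (a + c) * b ^ r := by rw [h1, div_mul_eq_mul_div, mul_div_assoc, h2]; ring
      _ ≤ max (a + c) (M / τ ^ (1 + α)) * b ^ r := by gcongr; exact le_max_left _ _
  · have hτr : τ ^ (1 + α) < b ^ r := h1 ▸ Real.rpow_lt_rpow hτ.le hτε hα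
    have hτ0 : 0 < τ ^ (1 + α) := Real.rpow_pos_of_pos hτ _
    calc E ≤ M / τ ^ (1 + α) * τ ^ (1 + α) := by rwa [div_mul_cancel₀ _ hτ0.ne']
      _ ≤ M / τ ^ (1 + α) * b ^ r := by gcongr
      _ ≤ max (a + c) (M / τ ^ (1 + α)) * b ^ r := by gcongr; exact le_max_right _ _

lemma le_ofReal_mul_rpow_of_tradeoff {E B : ℝ≥0∞} {τ a c M α s : ℝ} (hτ : 0 < τ)
    (hα : 0 < 1 + α) (hsα : 0 < s + α) (hM : 0 < M) (ha : 0 ≤ a) (hc : 0 ≤ c)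
    (hEM : E ≤ ENNReal.ofReal M)
    (h : ∀ ε, 0 < ε → ε ≤ τ →
      E ≤ ENNReal.ofReal (a * ε ^ (1 + α)) + ENNReal.ofReal (c / ε ^ (s - 1)) * B) :
    E ≤ ENNReal.ofReal (max (a + c) (M / τ ^ (1 + α))) * B ^ ((1 + α) / (s + α)) := by
  have hr : 0 < (1 + α) / (s + α) := div_pos hα hsα
  have hD : 0 < max (a + c) (M / τ ^ (1 + α)) :=
    lt_max_of_lt_right (div_pos hM (Real.rpow_pos_of_pos hτ _))
  rcases eq_or_ne B ⊤ with rfl | hB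
  · rw [ENNReal.top_rpow_of_pos hr, ENNReal.mul_top (ENNReal.ofReal_pos.2 hD).ne']
    exact le_top
  have hE : E ≠ ⊤ := ne_top_of_le_ne_top ENNReal.ofReal_ne_top hEM
  rw [← ENNReal.ofReal_toReal hE, ← ENNReal.ofReal_toReal hB,
    ENNReal.ofReal_rpow_of_nonneg ENNReal.toReal_nonneg hr.le, ← ENNReal.ofReal_mul hD.le]
  refine ENNReal.ofReal_le_ofReal (le_max_mul_rpow_of_tradeoff hτ hα hsα hM.le
    ENNReal.toReal_nonneg (ENNReal.toReal_le_of_le_ofReal hM.le hEM) fun ε hε hετ => ?_)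
  have hε' : 0 < ε ^ (s - 1) := Real.rpow_pos_of_pos hε _
  have hbound := h ε hε hετ
  rw [← ENNReal.ofReal_toReal hB, ← ENNReal.ofReal_mul (div_nonneg hc hε'.le),
    ← ENNReal.ofReal_add (mul_nonneg ha (Real.rpow_pos_of_pos hε _).le)
      (mul_nonneg (div_nonneg hc hε'.le) ENNReal.toReal_nonneg)] at hbound
  exact ENNReal.toReal_le_of_le_ofReal (by positivity) hbound

/-- Tighter excess risk bound under the margin condition: if in addition
`μ{x : |p(x) − π_k| ≤ t} ≤ A·t^α` for all `t ∈ [0, t_max)`, then with `β = α/(1+α)` there is a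
constant `D > 0` (depending only on `C, s, A, α`) such that for every measurable `f`,
`ΔR(f) ≤ D·ΔQ(f)^{1/(s+β−βs)}`. -/
theorem stmt_10 {X : Type*} [MeasurableSpace X] (μ : Measure X) [IsProbabilityMeasure μ]
    (K : ℕ) (hK : 1 ≤ K) (pp : ℕ → ℝ)
    (hpp0' : pp 0 = 0) (hppK1 : pp (K + 1) = 1)
    (hpp0 : 0 < pp 1) (hppK : pp K < 1)
    (hppmono : ∀ k, 1 ≤ k → k < K → pp k < pp (k + 1))
    (p : X → ℝ) (hpmeas : Measurable p) (hp0 : ∀ x, 0 ≤ p x) (hp1 : ∀ x, p x ≤ 1)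
    (φp φm : ℝ → ℝ)
    (hφpconv : ConvexOn ℝ Set.univ φp) (hφmconv : ConvexOn ℝ Set.univ φm)
    (hφp0 : ∀ z, 0 ≤ φp z) (hφm0 : ∀ z, 0 ≤ φm z)
    (δ : ℕ → ℝ) (hδmono : ∀ k, 1 ≤ k → k < K → δ k < δ (k + 1))
    (dp dm : ℕ → ℝ)
    (hcons : ∀ k ∈ Finset.Icc 1 K,
      HasDerivAt φp (dp k) (δ k) ∧ HasDerivAt φm (dm k) (-(δ k))
        ∧ dp k < 0 ∧ dm k < 0 ∧ dm k / (dm k + dp k) = pp k)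
    (C s : ℝ) (hC : 0 < C) (hs : 1 ≤ s)
    (hcomp : ∀ x : X, ∀ k ∈ Finset.Icc 1 K,
      |p x - pp k| ^ s ≤ C ^ s * (condSurrRisk φp φm (p x) (δ k)
        - ⨅ t : ℝ, condSurrRisk φp φm (p x) t))
    -- margin condition with constants A ≥ 1 and α > 0
    (A α : ℝ) (hA : 1 ≤ A) (hα : 0 < α)
    (hmargin : ∀ k ∈ Finset.Icc 1 K, ∀ t : ℝ, 0 ≤ t →
      (∀ j ∈ Finset.Icc 1 (K + 1), t < pp j - pp (j - 1)) →
      μ {x | |p x - pp k| ≤ t} ≤ ENNReal.ofReal (A * t ^ α)) :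
    ∃ D : ℝ, 0 < D ∧ ∀ f : X → ℝ, Measurable f →
      excessR μ K pp p δ f
        ≤ ENNReal.ofReal D
          * excessQ μ φp φm p f ^ (1 / (s + α / (1 + α) - (α / (1 + α)) * s)) := by
  have hpp_strict : StrictMonoOn pp (Set.Icc 0 (K + 1)) :=
    strictMonoOn_Icc_zero_of_lt_add_one (by rwa [hpp0']) (by rwa [hppK1]) hppmono
  have hpp : MonotoneOn pp (Set.Icc 1 K) :=
    hpp_strict.monotoneOn.mono (Set.Icc_subset_Icc zero_le_one K.le_succ)
  have hδ : MonotoneOn δ (Set.Icc 1 K) :=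
    monotoneOn_of_le_add_one Set.ordConnected_Icc fun k _ hk hk1 => (hδmono k hk.1 hk1.2).le
  have hdist : ∀ x, ∀ k ∈ Finset.Icc 1 K, |p x - pp k| ≤ 1 := fun x k hk => by
    obtain ⟨h0, h1⟩ := hpp_strict.monotoneOn.mapsTo_Icc
      (⟨k.zero_le, (Finset.mem_Icc.1 hk).2.trans K.le_succ⟩ : k ∈ Set.Icc 0 (K + 1))
    exact abs_sub_le_of_nonneg_of_le (hp0 x) (hp1 x) (hpp0' ▸ h0) (hppK1 ▸ h1)
  obtain ⟨τ, hτ, hτgap⟩ := Finset.exists_pos_forall_lt (Finset.Icc 1 (K + 1))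
    (g := fun j => pp j - pp (j - 1)) fun j hj => by
      obtain ⟨hj1, hjK⟩ := Finset.mem_Icc.1 hj
      exact sub_pos.2 (hpp_strict ⟨Nat.zero_le _, by omega⟩ ⟨Nat.zero_le _, hjK⟩ (by omega))
  refine ⟨max (2 * A + 2 * C ^ s) (2 / τ ^ (1 + α)),
    lt_max_of_lt_right (div_pos two_pos (Real.rpow_pos_of_pos hτ _)), fun f _ => ?_⟩
  have hexp : s + α / (1 + α) - α / (1 + α) * s = (s + α) / (1 + α) := by
    field_simp
    ring
  rw [hexp, one_div_div]
  have hCs : 0 ≤ C ^ s := Real.rpow_nonneg hC.le s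
  refine le_ofReal_mul_rpow_of_tradeoff hτ (by linarith) (by linarith) two_pos (by linarith)
    (by positivity) (excessR_le_two hK hpp hδ hdist f) fun ε hε hετ => ?_
  refine excessR_le_margin_add hK hpp hδ hpmeas hs hε hCs
    (fun x => condSurrExcess_nonneg hφp0 hφm0 (hp0 x) (hp1 x) (f x))
    (fun k hk => hmargin k hk ε hε.le fun j hj => hετ.trans_lt (hτgap j hj))
    fun x k hk hmis => (hcomp x k hk).trans ?_
  obtain ⟨hdp, hdm, hdp0, hdm0, hπ⟩ := hcons k hk
  exact mul_le_mul_of_nonneg_left (sub_le_sub_right (condSurrRisk_le_of_misclassified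
    hφpconv hφmconv (hp0 x) (hp1 x) hdp hdm (by linarith) hπ hmis) _) hCs
end

section
/- Suppose conditions (C1)–(C3) hold for the piecewise linear surrogates φ⁺, φ⁻. Then for every p ∈ [0,1], the pointwise surrogate-optimal value t*_p is a global minimizer of the conditional surrogate risk: Q_p(t*_p) ≤ Q_p(t) for all t ∈ ℝ. (Explicitly: if p ≤ π_1 the minimizer is H_0; if p ∈ (π_k, π_{k+1}] for 1 ≤ k ≤ K−1 the minimizer is the hinge point H_k; and if p > π_K the minimizer is H_K.) -/
/-- Piecewise linear surrogate `φ(z) = max{0, max_{1≤k≤K} (A_k + B_k·z)}`. -/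
noncomputable def phiPL (K : ℕ) (A B : ℕ → ℝ) (z : ℝ) : ℝ :=
  (Finset.Icc 1 K).fold max 0 fun k => A k + B k * z

/-!
`Q_p` is a convex piecewise linear function, so a point is a global minimizer as soon as `Q_p`
has a supporting line of slope `≤ 0` and one of slope `≥ 0` there. At the hinge `H_k` the pieces
`k` and `k + 1` of both `φ⁺(t)` and `φ⁻(-t)` are active: (C1) orders the slopes so that piece `k`
dominates between `H_{k-1}` and `H_k`, and (C2) makes the hinges of `φ⁺` and of `t ↦ φ⁻(-t)`
coincide. By (C3) the slope `p B⁺_k - (1 - p) B⁻_k` of the combined piece `k` of `Q_p` is `≤ 0`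
exactly when `π_k ≤ p`, so `π_k < p ≤ π_{k+1}` makes `H_k` a minimizer. At the end hinges `H_0`
and `H_K` the zero piece of `φ⁻` resp. `φ⁺` takes the place of the missing neighbouring piece.
-/

open Finset

def HasSubgradientAt (f : ℝ → ℝ) (s x : ℝ) : Prop :=
  ∀ y, f x + s * (y - x) ≤ f y

theorem HasSubgradientAt.le_of_nonpos_of_nonneg {f : ℝ → ℝ} {s₁ s₂ x : ℝ}
    (h₁ : HasSubgradientAt f s₁ x) (h₂ : HasSubgradientAt f s₂ x) (hs₁ : s₁ ≤ 0) (hs₂ : 0 ≤ s₂)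
    (y : ℝ) : f x ≤ f y := by
  rcases le_total y x with hyx | hxy
  · nlinarith [h₁ y, mul_nonneg_of_nonpos_of_nonpos hs₁ (sub_nonpos.2 hyx)]
  · nlinarith [h₂ y, mul_nonneg hs₂ (sub_nonneg.2 hxy)]

theorem HasSubgradientAt.condSurrRisk {f g : ℝ → ℝ} {s r x p : ℝ}
    (hf : HasSubgradientAt f s x) (hg : HasSubgradientAt g r (-x)) (hp₀ : 0 ≤ p) (hp₁ : p ≤ 1) :
    HasSubgradientAt (condSurrRisk f g p) (p * s - (1 - p) * r) x := by
  intro y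
  have hfy := mul_le_mul_of_nonneg_left (hf y) hp₀
  have hgy := mul_le_mul_of_nonneg_left (hg (-y)) (sub_nonneg.2 hp₁)
  unfold _root_.condSurrRisk
  linear_combination hfy + hgy

theorem mul_sub_one_sub_mul_nonpos_iff {p b c : ℝ} (h : c + b < 0) :
    p * b - (1 - p) * c ≤ 0 ↔ c / (c + b) ≤ p := by
  rw [div_le_iff_of_neg h]
  constructor <;> intro <;> linarith

theorem mul_sub_one_sub_mul_nonneg_iff {p b c : ℝ} (h : c + b < 0) :
    0 ≤ p * b - (1 - p) * c ↔ p ≤ c / (c + b) := by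
  rw [le_div_iff_of_neg h]
  constructor <;> intro <;> linarith

theorem exists_lt_le_succ_of_lt_of_le {α : Type*} [LinearOrder α] {f : ℕ → α} {x : α} {a b : ℕ}
    (hab : a ≤ b) (ha : f a < x) (hb : x ≤ f b) : ∃ k, a ≤ k ∧ k < b ∧ f k < x ∧ x ≤ f (k + 1) := by
  induction b, hab using Nat.le_induction with
  | base => exact absurd hb (not_le.2 ha)
  | succ n hn ih =>
    rcases lt_or_ge (f n) x with h | h
    · exact ⟨n, hn, n.lt_succ_self, h, hb⟩
    · obtain ⟨k, hk, hkn, hfk, hfk'⟩ := ih h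
      exact ⟨k, hk, hkn.trans n.lt_succ_self, hfk, hfk'⟩

section phiPL

variable {K k : ℕ} {A B : ℕ → ℝ} {z : ℝ}

theorem phiPL_nonneg : 0 ≤ phiPL K A B z :=
  (le_fold_max _).2 (Or.inl le_rfl)

theorem le_phiPL (hk : k ∈ Icc 1 K) : A k + B k * z ≤ phiPL K A B z :=
  (le_fold_max _).2 (Or.inr ⟨k, hk, le_rfl⟩)

theorem phiPL_eq_of_forall_le (hk : k ∈ Icc 1 K)
    (hmax : ∀ j ∈ Icc 1 K, A j + B j * z ≤ A k + B k * z) (h₀ : 0 ≤ A k + B k * z) :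
    phiPL K A B z = A k + B k * z :=
  le_antisymm ((fold_max_le _).2 ⟨h₀, hmax⟩) (le_phiPL hk)

theorem phiPL_comp_neg : phiPL K A B (-z) = phiPL K A (-B) z := by
  simp only [phiPL, Pi.neg_apply, mul_neg, neg_mul]

theorem hasSubgradientAt_phiPL (hk : k ∈ Icc 1 K) (h : phiPL K A B z = A k + B k * z) :
    HasSubgradientAt (phiPL K A B) (B k) z := fun y => by
  rw [h]
  linarith [le_phiPL (A := A) (B := B) (z := y) hk]

theorem hasSubgradientAt_phiPL_zero (h : phiPL K A B z = 0) :
    HasSubgradientAt (phiPL K A B) 0 z := fun _ => by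
  rw [h, zero_mul, add_zero]
  exact phiPL_nonneg

end phiPL

section Hinges

variable {K k : ℕ} {a b h : ℕ → ℝ} {u : ℝ}

theorem piece_le_piece_of_mem_Icc_hinges (hb : ∀ i, 1 ≤ i → i < K → b i < b (i + 1))
    (hh : ∀ i, 1 ≤ i → i < K → h i = (a i - a (i + 1)) / (b (i + 1) - b i))
    (hmono : MonotoneOn h (Set.Iic K)) (hk : k ∈ Icc 1 K) (hu : u ∈ Set.Icc (h (k - 1)) (h k))
    {j : ℕ} (hj : j ∈ Icc 1 K) : a j + b j * u ≤ a k + b k * u := by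
  obtain ⟨hk₁, hkK⟩ := mem_Icc.1 hk
  obtain ⟨hj₁, hjK⟩ := mem_Icc.1 hj
  have step : ∀ i, 1 ≤ i → i < K →
      a (i + 1) + b (i + 1) * u - (a i + b i * u) = (b (i + 1) - b i) * (u - h i) := by
    intro i hi₁ hiK
    rw [hh i hi₁ hiK]
    field_simp [(sub_pos.2 (hb i hi₁ hiK)).ne']
    ring
  rcases le_total j k with hjk | hkj
  · refine monotoneOn_of_le_add_one (f := fun i => a i + b i * u) Set.ordConnected_Icc
      (fun i _ ⟨hji, _⟩ ⟨_, hik⟩ => ?_) ⟨le_rfl, hjk⟩ ⟨hjk, le_rfl⟩ hjk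
    have hiu : h i ≤ u :=
      (hmono (Set.mem_Iic.2 (by omega)) (Set.mem_Iic.2 (by omega)) (by omega)).trans hu.1
    nlinarith [step i (by omega) (by omega), hb i (by omega) (by omega)]
  · refine antitoneOn_of_add_one_le (f := fun i => a i + b i * u) Set.ordConnected_Icc
      (fun i _ ⟨hki, _⟩ ⟨_, hij⟩ => ?_) ⟨le_rfl, hkj⟩ ⟨hkj, le_rfl⟩ hkj
    have hui : u ≤ h i :=
      hu.2.trans (hmono (Set.mem_Iic.2 hkK) (Set.mem_Iic.2 (by omega)) hki)
    nlinarith [step i (by omega) (by omega), hb i (by omega) (by omega)]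

theorem phiPL_eq_of_mem_Icc_hinges_of_neg (hb : ∀ i, 1 ≤ i → i < K → b i < b (i + 1))
    (hbK : b K < 0) (hh : ∀ i, 1 ≤ i → i < K → h i = (a i - a (i + 1)) / (b (i + 1) - b i))
    (hhK : h K = -a K / b K) (hmono : MonotoneOn h (Set.Iic K)) (hk : k ∈ Icc 1 K)
    (hu : u ∈ Set.Icc (h (k - 1)) (h k)) : phiPL K a b u = a k + b k * u := by
  obtain ⟨hk₁, hkK⟩ := mem_Icc.1 hk
  have huK : u ≤ h K := hu.2.trans (hmono (Set.mem_Iic.2 hkK) (Set.mem_Iic.2 le_rfl) hkK)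
  refine phiPL_eq_of_forall_le hk
    (fun _ hj => piece_le_piece_of_mem_Icc_hinges hb hh hmono hk hu hj) ?_
  calc 0 ≤ b K * (u - h K) := mul_nonneg_of_nonpos_of_nonpos hbK.le (sub_nonpos.2 huK)
    _ = a K + b K * u := by rw [hhK]; field_simp [hbK.ne]; ring
    _ ≤ a k + b k * u :=
      piece_le_piece_of_mem_Icc_hinges hb hh hmono hk hu (mem_Icc.2 ⟨hk₁.trans hkK, le_rfl⟩)

theorem phiPL_eq_of_mem_Icc_hinges_of_pos (hb : ∀ i, 1 ≤ i → i < K → b i < b (i + 1))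
    (hb₁ : 0 < b 1) (hh : ∀ i, 1 ≤ i → i < K → h i = (a i - a (i + 1)) / (b (i + 1) - b i))
    (hh₀ : h 0 = -a 1 / b 1) (hmono : MonotoneOn h (Set.Iic K)) (hk : k ∈ Icc 1 K)
    (hu : u ∈ Set.Icc (h (k - 1)) (h k)) : phiPL K a b u = a k + b k * u := by
  obtain ⟨hk₁, hkK⟩ := mem_Icc.1 hk
  have hu₀ : h 0 ≤ u := (hmono (Set.mem_Iic.2 (Nat.zero_le K)) (Set.mem_Iic.2 (by omega))
    (Nat.zero_le _)).trans hu.1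
  refine phiPL_eq_of_forall_le hk
    (fun _ hj => piece_le_piece_of_mem_Icc_hinges hb hh hmono hk hu hj) ?_
  calc 0 ≤ b 1 * (u - h 0) := mul_nonneg hb₁.le (sub_nonneg.2 hu₀)
    _ = a 1 + b 1 * u := by rw [hh₀]; field_simp [hb₁.ne']; ring
    _ ≤ a k + b k * u :=
      piece_le_piece_of_mem_Icc_hinges hb hh hmono hk hu (mem_Icc.2 ⟨le_rfl, hk₁.trans hkK⟩)

end Hinges

/-- The hinge formulas and (C1)–(C3), with `H⁻_k` eliminated through `-H⁻_k = H_k`. -/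
structure SurrogateConditions (K : ℕ) (pp Ap Bp Am Bm H : ℕ → ℝ) : Prop where
  one_le : 1 ≤ K
  slope_plus_lt : ∀ k, 1 ≤ k → k < K → Bp k < Bp (k + 1)
  slope_plus_last_neg : Bp K < 0
  slope_minus_lt : ∀ k, 1 ≤ k → k < K → Bm (k + 1) < Bm k
  slope_minus_first_neg : Bm 1 < 0
  hinge_zero : H 0 = Am 1 / Bm 1
  hinge_plus : ∀ k, 1 ≤ k → k < K → H k = (Ap k - Ap (k + 1)) / (Bp (k + 1) - Bp k)
  hinge_minus : ∀ k, 1 ≤ k → k < K → H k = -((Am k - Am (k + 1)) / (Bm (k + 1) - Bm k))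
  hinge_last : H K = -Ap K / Bp K
  hinge_mono : MonotoneOn H (Set.Iic K)
  threshold : ∀ k ∈ Icc 1 K, Bm k / (Bm k + Bp k) = pp k

namespace SurrogateConditions

variable {K k j : ℕ} {pp Ap Bp Am Bm H : ℕ → ℝ} {p u : ℝ}

theorem slope_plus_neg (hC : SurrogateConditions K pp Ap Bp Am Bm H) (hk : k ∈ Icc 1 K) :
    Bp k < 0 := by
  obtain ⟨hk₁, hkK⟩ := mem_Icc.1 hk
  have hmono : MonotoneOn Bp (Set.Icc 1 K) := monotoneOn_of_le_add_one Set.ordConnected_Icc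
    fun i _ ⟨hi₁, _⟩ ⟨_, hiK⟩ => (hC.slope_plus_lt i hi₁ hiK).le
  exact (hmono ⟨hk₁, hkK⟩ ⟨hk₁.trans hkK, le_rfl⟩ hkK).trans_lt hC.slope_plus_last_neg

theorem slope_minus_neg (hC : SurrogateConditions K pp Ap Bp Am Bm H) (hk : k ∈ Icc 1 K) :
    Bm k < 0 := by
  obtain ⟨hk₁, hkK⟩ := mem_Icc.1 hk
  have hanti : AntitoneOn Bm (Set.Icc 1 K) := antitoneOn_of_add_one_le Set.ordConnected_Icc
    fun i _ ⟨hi₁, _⟩ ⟨_, hiK⟩ => (hC.slope_minus_lt i hi₁ hiK).le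
  exact (hanti ⟨le_rfl, hk₁.trans hkK⟩ ⟨hk₁, hkK⟩ hk₁).trans_lt hC.slope_minus_first_neg

theorem hinge_mem_Icc (hC : SurrogateConditions K pp Ap Bp Am Bm H) (hjk : k - 1 ≤ j)
    (hjk' : j ≤ k) (hkK : k ≤ K) : H j ∈ Set.Icc (H (k - 1)) (H k) :=
  ⟨hC.hinge_mono (Set.mem_Iic.2 (by omega)) (Set.mem_Iic.2 (by omega)) hjk,
    hC.hinge_mono (Set.mem_Iic.2 (by omega)) (Set.mem_Iic.2 hkK) hjk'⟩

theorem phiPL_plus_eq (hC : SurrogateConditions K pp Ap Bp Am Bm H) (hk : k ∈ Icc 1 K)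
    (hu : u ∈ Set.Icc (H (k - 1)) (H k)) : phiPL K Ap Bp u = Ap k + Bp k * u :=
  phiPL_eq_of_mem_Icc_hinges_of_neg hC.slope_plus_lt hC.slope_plus_last_neg hC.hinge_plus
    hC.hinge_last hC.hinge_mono hk hu

theorem phiPL_minus_eq (hC : SurrogateConditions K pp Ap Bp Am Bm H) (hk : k ∈ Icc 1 K)
    (hu : u ∈ Set.Icc (H (k - 1)) (H k)) : phiPL K Am Bm (-u) = Am k + Bm k * -u := by
  have hb (i : ℕ) (hi₁ : 1 ≤ i) (hiK : i < K) : (-Bm) i < (-Bm) (i + 1) :=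
    neg_lt_neg (hC.slope_minus_lt i hi₁ hiK)
  have hh (i : ℕ) (hi₁ : 1 ≤ i) (hiK : i < K) :
      H i = (Am i - Am (i + 1)) / ((-Bm) (i + 1) - (-Bm) i) := by
    rw [hC.hinge_minus i hi₁ hiK, Pi.neg_apply, Pi.neg_apply, neg_sub_neg, ← div_neg, neg_sub]
  have hh₀ : H 0 = -Am 1 / (-Bm) 1 := by
    rw [hC.hinge_zero, Pi.neg_apply, neg_div_neg_eq]
  rw [phiPL_comp_neg, phiPL_eq_of_mem_Icc_hinges_of_pos hb (neg_pos.2 hC.slope_minus_first_neg)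
    hh hh₀ hC.hinge_mono hk hu, Pi.neg_apply, neg_mul, mul_neg]

theorem hasSubgradientAt_risk (hC : SurrogateConditions K pp Ap Bp Am Bm H) (hp₀ : 0 ≤ p)
    (hp₁ : p ≤ 1) (hk : k ∈ Icc 1 K) (hu : u ∈ Set.Icc (H (k - 1)) (H k)) :
    HasSubgradientAt (condSurrRisk (phiPL K Ap Bp) (phiPL K Am Bm) p)
      (p * Bp k - (1 - p) * Bm k) u :=
  (hasSubgradientAt_phiPL hk (hC.phiPL_plus_eq hk hu)).condSurrRisk
    (hasSubgradientAt_phiPL hk (hC.phiPL_minus_eq hk hu)) hp₀ hp₁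

theorem risk_slope_nonpos (hC : SurrogateConditions K pp Ap Bp Am Bm H) (hk : k ∈ Icc 1 K)
    (hp : pp k ≤ p) : p * Bp k - (1 - p) * Bm k ≤ 0 :=
  (mul_sub_one_sub_mul_nonpos_iff (add_neg (hC.slope_minus_neg hk) (hC.slope_plus_neg hk))).2
    ((hC.threshold k hk).trans_le hp)

theorem risk_slope_nonneg (hC : SurrogateConditions K pp Ap Bp Am Bm H) (hk : k ∈ Icc 1 K)
    (hp : p ≤ pp k) : 0 ≤ p * Bp k - (1 - p) * Bm k :=
  (mul_sub_one_sub_mul_nonneg_iff (add_neg (hC.slope_minus_neg hk) (hC.slope_plus_neg hk))).2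
    (hp.trans_eq (hC.threshold k hk).symm)

theorem risk_hinge_zero_le (hC : SurrogateConditions K pp Ap Bp Am Bm H) (hp₀ : 0 ≤ p)
    (hp₁ : p ≤ 1) (hp : p ≤ pp 1) (t : ℝ) :
    condSurrRisk (phiPL K Ap Bp) (phiPL K Am Bm) p (H 0)
      ≤ condSurrRisk (phiPL K Ap Bp) (phiPL K Am Bm) p t := by
  have h₁ : 1 ∈ Icc 1 K := mem_Icc.2 ⟨le_rfl, hC.one_le⟩
  have hu : H 0 ∈ Set.Icc (H (1 - 1)) (H 1) := hC.hinge_mem_Icc le_rfl zero_le_one hC.one_le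
  have hφm : phiPL K Am Bm (-H 0) = 0 := by
    rw [hC.phiPL_minus_eq h₁ hu, hC.hinge_zero]
    field_simp [hC.slope_minus_first_neg.ne]
    ring
  have hleft := (hasSubgradientAt_phiPL h₁ (hC.phiPL_plus_eq h₁ hu)).condSurrRisk
    (hasSubgradientAt_phiPL_zero hφm) hp₀ hp₁
  refine hleft.le_of_nonpos_of_nonneg (hC.hasSubgradientAt_risk hp₀ hp₁ h₁ hu) ?_
    (hC.risk_slope_nonneg h₁ hp) t
  nlinarith [hC.slope_plus_neg h₁]

theorem risk_hinge_le (hC : SurrogateConditions K pp Ap Bp Am Bm H) (hp₀ : 0 ≤ p)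
    (hp₁ : p ≤ 1) (hk₁ : 1 ≤ k) (hkK : k < K) (hpk : pp k ≤ p) (hpk' : p ≤ pp (k + 1)) (t : ℝ) :
    condSurrRisk (phiPL K Ap Bp) (phiPL K Am Bm) p (H k)
      ≤ condSurrRisk (phiPL K Ap Bp) (phiPL K Am Bm) p t := by
  have hk : k ∈ Icc 1 K := mem_Icc.2 ⟨hk₁, hkK.le⟩
  have hk' : k + 1 ∈ Icc 1 K := mem_Icc.2 ⟨by omega, hkK⟩
  have hu : H k ∈ Set.Icc (H (k - 1)) (H k) := hC.hinge_mem_Icc (Nat.sub_le k 1) le_rfl hkK.le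
  have hu' : H k ∈ Set.Icc (H (k + 1 - 1)) (H (k + 1)) :=
    hC.hinge_mem_Icc (by omega) (Nat.le_succ k) hkK
  exact (hC.hasSubgradientAt_risk hp₀ hp₁ hk hu).le_of_nonpos_of_nonneg
    (hC.hasSubgradientAt_risk hp₀ hp₁ hk' hu') (hC.risk_slope_nonpos hk hpk)
    (hC.risk_slope_nonneg hk' hpk') t

theorem risk_hinge_last_le (hC : SurrogateConditions K pp Ap Bp Am Bm H) (hp₀ : 0 ≤ p)
    (hp₁ : p ≤ 1) (hp : pp K ≤ p) (t : ℝ) :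
    condSurrRisk (phiPL K Ap Bp) (phiPL K Am Bm) p (H K)
      ≤ condSurrRisk (phiPL K Ap Bp) (phiPL K Am Bm) p t := by
  have hK : K ∈ Icc 1 K := mem_Icc.2 ⟨hC.one_le, le_rfl⟩
  have hu : H K ∈ Set.Icc (H (K - 1)) (H K) := hC.hinge_mem_Icc (Nat.sub_le K 1) le_rfl le_rfl
  have hφp : phiPL K Ap Bp (H K) = 0 := by
    rw [hC.phiPL_plus_eq hK hu, hC.hinge_last]
    field_simp [hC.slope_plus_last_neg.ne]
    ring
  have hright := (hasSubgradientAt_phiPL_zero hφp).condSurrRisk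
    (hasSubgradientAt_phiPL hK (hC.phiPL_minus_eq hK hu)) hp₀ hp₁
  refine (hC.hasSubgradientAt_risk hp₀ hp₁ hK hu).le_of_nonpos_of_nonneg hright
    (hC.risk_slope_nonpos hK hp) ?_ t
  nlinarith [hC.slope_minus_neg hK]

end SurrogateConditions

theorem stmt_11_general (K : ℕ) (hK : 1 ≤ K) (pp : ℕ → ℝ)
    (Ap Bp Am Bm : ℕ → ℝ) (H Hm : ℕ → ℝ)
    -- hinge points
    (hH0 : H 0 = Am 1 / Bm 1)
    (hHmid : ∀ k, 1 ≤ k → k ≤ K - 1 → H k = (Ap k - Ap (k + 1)) / (Bp (k + 1) - Bp k))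
    (hHK : H K = -Ap K / Bp K)
    (hHm : ∀ k, 1 ≤ k → k ≤ K - 1 → Hm k = (Am k - Am (k + 1)) / (Bm (k + 1) - Bm k))
    -- (C1)
    (hC1p : ∀ k, 1 ≤ k → k < K → Bp k < Bp (k + 1)) (hC1pK : Bp K < 0)
    (hC1m : ∀ k, 1 ≤ k → k < K → Bm (k + 1) < Bm k) (hC1m1 : Bm 1 < 0)
    -- (C2)
    (hC2a : ∀ k, 1 ≤ k → k ≤ K - 1 → -Hm k = H k)
    (hC2b : ∀ k, k < K → H k < H (k + 1))
    -- (C3)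
    (hC3 : ∀ k ∈ Finset.Icc 1 K, Bm k / (Bm k + Bp k) = pp k)
    -- pointwise surrogate-optimal value
    (tst : ℝ → ℝ)
    (htst0 : ∀ p : ℝ, p ≤ pp 1 → tst p = H 0)
    (htstmid : ∀ p : ℝ, ∀ k, 1 ≤ k → k ≤ K - 1 → pp k < p → p ≤ pp (k + 1) → tst p = H k)
    (htstK : ∀ p : ℝ, pp K < p → tst p = H K) :
    ∀ p : ℝ, 0 ≤ p → p ≤ 1 → ∀ t : ℝ,
      condSurrRisk (phiPL K Ap Bp) (phiPL K Am Bm) p (tst p)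
        ≤ condSurrRisk (phiPL K Ap Bp) (phiPL K Am Bm) p t := by
  have hC : SurrogateConditions K pp Ap Bp Am Bm H :=
    { one_le := hK
      slope_plus_lt := hC1p
      slope_plus_last_neg := hC1pK
      slope_minus_lt := hC1m
      slope_minus_first_neg := hC1m1
      hinge_zero := hH0
      hinge_plus := fun k hk₁ hkK => hHmid k hk₁ (by omega)
      hinge_minus := fun k hk₁ hkK => by rw [← hC2a k hk₁ (by omega), hHm k hk₁ (by omega)]
      hinge_last := hHK
      hinge_mono := (strictMonoOn_Iic_of_lt_succ hC2b).monotoneOn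
      threshold := hC3 }
  intro p hp₀ hp₁ t
  rcases le_or_gt p (pp 1) with hp | hp
  · rw [htst0 p hp]
    exact hC.risk_hinge_zero_le hp₀ hp₁ hp t
  rcases le_or_gt p (pp K) with hpK | hpK
  · obtain ⟨k, hk₁, hkK, hpk, hpk'⟩ := exists_lt_le_succ_of_lt_of_le hK hp hpK
    rw [htstmid p k hk₁ (by omega) hpk hpk']
    exact hC.risk_hinge_le hp₀ hp₁ hk₁ hkK hpk.le hpk' t
  · rw [htstK p hpK]
    exact hC.risk_hinge_last_le hp₀ hp₁ hpK.le t

/-- Under conditions (C1)-(C3), the pointwise surrogate-optimal value `t*_p`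
(`H_0` if `p ≤ π_1`, `H_k` if `p ∈ (π_k, π_{k+1}]`, `H_K` if `p > π_K`)
is a global minimizer of the conditional surrogate risk `Q_p` over `ℝ`. -/
theorem stmt_11 (K : ℕ) (hK : 1 ≤ K) (pp : ℕ → ℝ)
    (hpp0 : 0 < pp 1) (hppK : pp K < 1)
    (hppmono : ∀ k, 1 ≤ k → k < K → pp k < pp (k + 1))
    (Ap Bp Am Bm : ℕ → ℝ) (H Hm : ℕ → ℝ)
    -- hinge points
    (hH0 : H 0 = Am 1 / Bm 1)
    (hHmid : ∀ k, 1 ≤ k → k ≤ K - 1 → H k = (Ap k - Ap (k + 1)) / (Bp (k + 1) - Bp k))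
    (hHK : H K = -Ap K / Bp K)
    (hHm : ∀ k, 1 ≤ k → k ≤ K - 1 → Hm k = (Am k - Am (k + 1)) / (Bm (k + 1) - Bm k))
    -- (C1)
    (hC1p : ∀ k, 1 ≤ k → k < K → Bp k < Bp (k + 1)) (hC1pK : Bp K < 0)
    (hC1m : ∀ k, 1 ≤ k → k < K → Bm (k + 1) < Bm k) (hC1m1 : Bm 1 < 0)
    -- (C2)
    (hC2a : ∀ k, 1 ≤ k → k ≤ K - 1 → -Hm k = H k)
    (hC2b : ∀ k, k < K → H k < H (k + 1))
    -- (C3)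
    (hC3 : ∀ k ∈ Finset.Icc 1 K, Bm k / (Bm k + Bp k) = pp k)
    -- pointwise surrogate-optimal value
    (tst : ℝ → ℝ)
    (htst0 : ∀ p : ℝ, p ≤ pp 1 → tst p = H 0)
    (htstmid : ∀ p : ℝ, ∀ k, 1 ≤ k → k ≤ K - 1 → pp k < p → p ≤ pp (k + 1) → tst p = H k)
    (htstK : ∀ p : ℝ, pp K < p → tst p = H K) :
    ∀ p : ℝ, 0 ≤ p → p ≤ 1 → ∀ t : ℝ,
      condSurrRisk (phiPL K Ap Bp) (phiPL K Am Bm) p (tst p)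
        ≤ condSurrRisk (phiPL K Ap Bp) (phiPL K Am Bm) p t :=
  stmt_11_general K hK pp Ap Bp Am Bm H Hm hH0 hHmid hHK hHm hC1p hC1pK hC1m hC1m1 hC2a hC2b hC3 tst
    htst0 htstmid htstK
end
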